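/- For every legal dominating sequence S of a graph G, the set I_S = {v ∈ V(G) : f_S(v) = v} of vertices that footprint themselves is an independent set of G. -/

import Mathlib

namespace GrundyDom

/-- Closed neighborhood N[v]. -/
def cn {V : Type*} (G : SimpleGraph V) (v : V) : Set V := insert v (G.neighborSet v)

/-- Union of closed neighborhoods of the vertices of a list. -/
def cnUnion {V : Type*} (G : SimpleGraph V) (L : List V) : Set V := ⋃ v ∈ L, cn G v

/-- Private neighborhood of `v` with respect to the first `i` entries of `S`:
`N[v] \ (N[v_1] ∪ ... ∪ N[v_i])`. -/
def PN {V : Type*} (G : SimpleGraph V) (S : List V) (i : ℕ) (v : V) : Set V :=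
  cn G v \ cnUnion G (S.take i)

/-- A legal dominating sequence: distinct vertices, dominating set, and every
vertex of the sequence has a nonempty private neighborhood w.r.t. its predecessors. -/
structure IsLegal {V : Type*} (G : SimpleGraph V) (S : List V) : Prop where
  nodup : S.Nodup
  dominates : ∀ v : V, ∃ u ∈ S, v ∈ cn G u
  legal : ∀ i : Fin S.length, (PN G S i.val (S.get i)).Nonempty

/-- The set `I_S` of vertices that footprint themselves in `S`. -/
def selfFoot {V : Type*} (G : SimpleGraph V) (S : List V) : Set V :=
  {v | ∃ i : Fin S.length, S.get i = v ∧ v ∈ PN G S i.val v}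

/-- Grundy domination number: maximum length of a legal dominating sequence. -/
noncomputable def gammaGr {V : Type*} (G : SimpleGraph V) : ℕ :=
  sSup {k | ∃ S : List V, IsLegal G S ∧ S.length = k}

/-- `γ_gr(G, I)`: maximum length of a legal dominating sequence `S` with `I_S = I`. -/
noncomputable def gammaGrOn {V : Type*} (G : SimpleGraph V) (I : Set V) : ℕ :=
  sSup {k | ∃ S : List V, IsLegal G S ∧ selfFoot G S = I ∧ S.length = k}

/-- `γ_gr^u(G)`: maximum of `γ_gr(G, I)` over independent sets `I` containing `u`. -/
noncomputable def gammaGrVert {V : Type*} (G : SimpleGraph V) (u : V) : ℕ :=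
  sSup {k | ∃ I : Set V, (∀ ⦃a⦄, a ∈ I → ∀ ⦃b⦄, b ∈ I → a ≠ b → ¬ G.Adj a b) ∧
    u ∈ I ∧ k = gammaGrOn G I}

/-- Independent set of a graph. -/
def IsIndep {V : Type*} (G : SimpleGraph V) (I : Set V) : Prop :=
  ∀ ⦃u⦄, u ∈ I → ∀ ⦃v⦄, v ∈ I → u ≠ v → ¬ G.Adj u v

/-- The X-join product `G ↩ 𝓡`: replace each vertex `v` of `G` by the graph `R v`. -/
def XJoin {V : Type*} (G : SimpleGraph V) {W : V → Type*} (R : ∀ v, SimpleGraph (W v)) :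
    SimpleGraph (Σ v, W v) where
  Adj x y := G.Adj x.1 y.1 ∨ ∃ h : x.1 = y.1, (R y.1).Adj (h ▸ x.2) y.2
  symm := by
    refine ⟨?_⟩
    rintro ⟨a, xa⟩ ⟨b, yb⟩ (h | ⟨h, hadj⟩)
    · exact Or.inl h.symm
    · dsimp at h hadj
      subst h
      exact Or.inr ⟨rfl, (R a).adj_symm hadj⟩
  loopless := by
    refine ⟨?_⟩
    rintro ⟨a, xa⟩ (h | ⟨h, hadj⟩)
    · exact G.irrefl h
    · exact (R a).irrefl hadj

/-- The lexicographic product `G ∘ H`. -/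
def Lex {V W : Type*} (G : SimpleGraph V) (H : SimpleGraph W) : SimpleGraph (V × W) where
  Adj x y := G.Adj x.1 y.1 ∨ (x.1 = y.1 ∧ H.Adj x.2 y.2)
  symm := by
    refine ⟨?_⟩
    rintro x y (h | ⟨h1, h2⟩)
    · exact Or.inl h.symm
    · exact Or.inr ⟨h1.symm, h2.symm⟩
  loopless := by
    refine ⟨?_⟩
    rintro x (h | ⟨_, h⟩)
    · exact G.irrefl h
    · exact H.irrefl h

/-- The replacement graph `G_{u ↩ H}`: replace the vertex `u` of `G` by `H`. -/
def Replace {V : Type*} (G : SimpleGraph V) (u : V) {W : Type*} (H : SimpleGraph W) :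
    SimpleGraph ({v : V // v ≠ u} ⊕ W) where
  Adj x y :=
    match x, y with
    | Sum.inl a, Sum.inl b => G.Adj a.1 b.1
    | Sum.inl a, Sum.inr _ => G.Adj a.1 u
    | Sum.inr _, Sum.inl b => G.Adj u b.1
    | Sum.inr h1, Sum.inr h2 => H.Adj h1 h2
  symm := ⟨by rintro (a|a) (b|b) h <;> exact h.symm⟩
  loopless := ⟨by rintro (a|a) h <;> exact h.ne rfl⟩

/-- `C_n^m`: the m-th power of the n-cycle, on vertex set `ZMod n`;
two vertices are adjacent iff their circular distance is between 1 and m. -/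
def cyclePow (n m : ℕ) : SimpleGraph (ZMod n) where
  Adj i j := i ≠ j ∧ ∃ k : ℕ, 1 ≤ k ∧ k ≤ m ∧ (j = i + k ∨ i = j + k)
  symm := by
    refine ⟨?_⟩
    rintro i j ⟨hne, k, h1, h2, h3⟩
    exact ⟨hne.symm, k, h1, h2, h3.symm⟩
  loopless := ⟨fun i h => h.1 rfl⟩

/-- `P_n^m`: the m-th power of the n-path, on vertex set `Fin n`
(vertex `i` represents the `(i+1)`-st vertex of the path);
two vertices adjacent iff their distance is between 1 and m. -/
def pathPow (n m : ℕ) : SimpleGraph (Fin n) where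
  Adj i j := i ≠ j ∧ Nat.dist i.val j.val ≤ m
  symm := by
    refine ⟨?_⟩
    rintro i j ⟨hne, hd⟩
    exact ⟨hne.symm, by rwa [Nat.dist_comm]⟩
  loopless := ⟨fun i h => h.1 rfl⟩

end GrundyDom

namespace GrundyDom

variable {V : Type*} {G : SimpleGraph V} {S : List V}

theorem cn_subset_cnUnion_take {i j : ℕ} (hij : i < j) (hi : i < S.length) :
    cn G S[i] ⊆ cnUnion G (S.take j) :=
  Set.subset_biUnion_of_mem (u := cn G) (List.mem_take_iff_getElem.2 ⟨i, by omega, rfl⟩)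

theorem notMem_cn_of_mem_PN {i j : ℕ} (hij : i < j) (hi : i < S.length) {v w : V}
    (hw : w ∈ PN G S j v) : w ∉ cn G S[i] :=
  fun hwi => hw.2 (cn_subset_cnUnion_take hij hi hwi)

theorem not_adj_of_mem_PN_self {i j : ℕ} (hij : i < j) (hi : i < S.length) {v : V}
    (hv : v ∈ PN G S j v) : ¬ G.Adj S[i] v :=
  fun hadj => notMem_cn_of_mem_PN hij hi hv (Set.mem_insert_of_mem _ hadj)

end GrundyDom

open GrundyDom Finset

theorem stmt0_general {V : Type*} (G : SimpleGraph V) (S : List V) :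
    IsIndep G (selfFoot G S) := by
  rintro u ⟨i, rfl, hi⟩ v ⟨j, rfl, hj⟩ hne hadj
  rcases lt_trichotomy i j with hij | rfl | hji
  · exact not_adj_of_mem_PN_self hij i.isLt hj hadj
  · exact hne rfl
  · exact not_adj_of_mem_PN_self hji j.isLt hi hadj.symm

/-- For every legal dominating sequence `S` of `G`, the set of vertices
footprinting themselves is an independent set of `G`. -/
theorem stmt0 {V : Type*} (G : SimpleGraph V) (S : List V) (hS : IsLegal G S) :
    IsIndep G (selfFoot G S) :=
  stmt0_general G S
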